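/- arXiv:1005.2789 — 2 statements merged into one kernel-verified Lean document; each statement's English description precedes it below -/
import Mathlib

section
/- For every integer q ≥ 0 and every real s, (1/(q! 2^q √π)) ∫_ℝ e^{ist} e^{-t²} H_q(t)² dt = L_q(s²/2) e^{-s²/4}, where H_q is the Hermite polynomial and L_q the Laguerre polynomial. -/
open MeasureTheory Real

/-- Hermite polynomials `H_q(t) = e^{t²/2} (d/dt - t)^q e^{-t²/2}` (3.11). -/
noncomputable def hermQ (q : ℕ) : ℝ → ℝ :=
  fun t => Real.exp (t ^ 2 / 2) *
    ((fun f : ℝ → ℝ => fun s => deriv f s - s * f s)^[q] (fun s => Real.exp (-(s ^ 2) / 2))) t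

/-- Laguerre polynomials `L_q(ξ) = (1/q!) e^ξ (d/dξ)^q (ξ^q e^{-ξ})`. -/
noncomputable def laguQ (q : ℕ) : ℝ → ℝ :=
  fun ξ => (q.factorial : ℝ)⁻¹ * Real.exp ξ *
    iteratedDeriv q (fun x : ℝ => x ^ q * Real.exp (-x)) ξ

/-- Normalized eigenfunctions of the harmonic oscillator `-d²/dt² + B²t²` (3.10). -/
noncomputable def oscFun (j : ℕ) (B t : ℝ) : ℝ :=
  B ^ ((1 : ℝ) / 4) / Real.sqrt ((j - 1).factorial * 2 ^ (j - 1) * Real.sqrt π) *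
    hermQ (j - 1) (Real.sqrt B * t) * Real.exp (-(B * t ^ 2) / 2)

/-- `I_j(s; B) = ∫ sin(st) t φ_j(t;B)² dt`. -/
noncomputable def oscI (j : ℕ) (B s : ℝ) : ℝ :=
  ∫ t : ℝ, Real.sin (s * t) * t * (oscFun j B t) ^ 2

/-- The odd polynomial function `𝒫_j(s) = (s/2)(L_{j-1}(s²/2) - 2 L'_{j-1}(s²/2))`. -/
noncomputable def oscP (j : ℕ) (s : ℝ) : ℝ :=
  s / 2 * (laguQ (j - 1) (s ^ 2 / 2) - 2 * deriv (laguQ (j - 1)) (s ^ 2 / 2))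

/-- Fourier coefficients `α_l = ∫₀¹ a(t) e^{-2πilt} dt`. -/
noncomputable def fourCoef (a : ℝ → ℝ) (l : ℕ) : ℂ :=
  ∫ t in (0 : ℝ)..1, (a t : ℂ) * Complex.exp (-(2 * π * l * t) * Complex.I)

/-- `F_j(k; B) = ∫ a(t + k/B) t φ_j(t;B)² dt` (3.17). -/
noncomputable def oscF (a : ℝ → ℝ) (j : ℕ) (B k : ℝ) : ℝ :=
  ∫ t : ℝ, a (t + k / B) * t * (oscFun j B t) ^ 2

/-!
Let `Φ_s(p) = ∫ e^{ist} e^{-t²} p(t) dt` on complex polynomials and `H_q = hermPoly ℂ q`, so that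
`H_{q+1} = H_q' - 2X H_q`. Integration by parts gives `Φ_s(p' - 2Xp) = -is Φ_s(p)`; since
`(H_m g)' - 2X H_m g = H_{m+1} g + H_m g'`, multiplying by `H_m` under `Φ_s` acts on `g` as
`(-is - d/dt)^m`. Expanding by the binomial theorem with `H_n' = -2n H_{n-1}` and using
`Φ_s(H_j) = (-is)^j Φ_s(1)`, `Φ_s(1) = √π e^{-s²/4}` turns `Φ_s(H_q²)` into a finite sum, which
is the coefficient expansion of `L_q(s²/2)` obtained from
`e^ξ (d/dξ)^q (ξ^q e^{-ξ}) = (d/dξ - 1)^q ξ^q`.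
-/

open Polynomial Finset Complex

theorem Module.End.smul_one_add_smul_pow_apply {R M : Type*} [CommSemiring R] [AddCommMonoid M]
    [Module R M] (f : Module.End R M) (a b : R) (n : ℕ) (v : M) :
    ((a • 1 + b • f) ^ n) v =
      ∑ k ∈ range (n + 1), (n.choose k * a ^ (n - k) * b ^ k) • f^[k] v := by
  rw [add_comm, ((Commute.one_right f).smul_right a).smul_left b |>.add_pow, LinearMap.sum_apply]
  refine sum_congr rfl fun k _ => ?_
  simp only [_root_.smul_pow, one_pow, Module.End.mul_apply, Module.End.natCast_apply,
    LinearMap.smul_apply, Module.End.one_apply, Module.End.pow_apply, map_smul, smul_smul,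
    ← Nat.cast_smul_eq_nsmul R]
  rw [mul_assoc]

theorem hasDerivAt_eval_mul {𝕜 : Type*} [NontriviallyNormedField 𝕜] {w : 𝕜 → 𝕜} {r : 𝕜[X]}
    {x : 𝕜} (hw : HasDerivAt w (r.eval x * w x) x) (p : 𝕜[X]) :
    HasDerivAt (fun x => p.eval x * w x) ((derivative p + r * p).eval x * w x) x :=
  ((p.hasDerivAt x).mul hw).congr_deriv (by simp only [eval_add, eval_mul]; ring)

/-- Conjugating `d/dt - t` by `e^{-t²/2}` gives `p ↦ p' - 2Xp`, so this is `(-1)^q` times the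
physicists' Hermite polynomial. -/
noncomputable def hermPoly (R : Type*) [CommRing R] : ℕ → R[X]
  | 0 => 1
  | q + 1 => derivative (hermPoly R q) - 2 * X * hermPoly R q

section hermPoly

variable {R : Type*} [CommRing R]

@[simp]
theorem hermPoly_zero : hermPoly R 0 = 1 := rfl

theorem hermPoly_succ (q : ℕ) :
    hermPoly R (q + 1) = derivative (hermPoly R q) - 2 * X * hermPoly R q := rfl

theorem map_hermPoly {S : Type*} [CommRing S] (f : R →+* S) (q : ℕ) :
    (hermPoly R q).map f = hermPoly S q := by
  induction q with
  | zero => simp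
  | succ q ih => simp [hermPoly_succ, ← derivative_map, ih]

theorem derivative_hermPoly_succ (n : ℕ) :
    derivative (hermPoly R (n + 1)) = -2 * (n + 1 : R[X]) * hermPoly R n := by
  induction n with
  | zero => simp [hermPoly_succ]
  | succ n ih =>
    have hD : derivative (hermPoly R n) = hermPoly R (n + 1) + 2 * X * hermPoly R n := by
      rw [hermPoly_succ]; ring
    rw [hermPoly_succ (n + 1), derivative_sub, ih]
    simp only [derivative_mul, derivative_neg, derivative_ofNat, derivative_add, derivative_natCast,
      derivative_one, derivative_X, ih, hD]
    push_cast
    ring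

theorem derivative_hermPoly (n : ℕ) :
    derivative (hermPoly R n) = -2 * (n : R[X]) * hermPoly R (n - 1) := by
  cases n with
  | zero => simp
  | succ n => simp [derivative_hermPoly_succ]

theorem iterate_derivative_hermPoly (n k : ℕ) :
    derivative^[k] (hermPoly R n) = (-2) ^ k * (n.descFactorial k : R[X]) * hermPoly R (n - k) := by
  induction k with
  | zero => simp
  | succ k ih =>
    rw [Function.iterate_succ_apply', ih, derivative_mul, derivative_hermPoly,
      Nat.descFactorial_succ, Nat.sub_sub]
    simp only [derivative_mul, derivative_pow, derivative_neg, derivative_ofNat, derivative_natCast]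
    push_cast
    ring

end hermPoly

theorem iterate_deriv_sub_id_mul_gaussian (q : ℕ) :
    (fun f : ℝ → ℝ => fun s => deriv f s - s * f s)^[q] (fun s => rexp (-(s ^ 2) / 2)) =
      fun t => (hermPoly ℝ q).eval t * rexp (-(t ^ 2) / 2) := by
  have hw (t : ℝ) :
      HasDerivAt (fun t => rexp (-(t ^ 2) / 2)) ((-X).eval t * rexp (-(t ^ 2) / 2)) t :=
    ((((hasDerivAt_pow 2 t).neg.div_const 2).exp).congr_deriv (by simp; ring))
  induction q with
  | zero => simp
  | succ q ih =>
    rw [Function.iterate_succ_apply', ih]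
    funext t
    rw [(hasDerivAt_eval_mul (hw t) _).deriv, hermPoly_succ]
    simp only [eval_add, eval_sub, eval_mul, eval_neg, eval_X, eval_ofNat]
    ring

theorem hermQ_eq_eval (q : ℕ) (t : ℝ) : hermQ q t = (hermPoly ℝ q).eval t := by
  rw [hermQ, iterate_deriv_sub_id_mul_gaussian, mul_left_comm, ← Real.exp_add,
    show t ^ 2 / 2 + -(t ^ 2) / 2 = 0 by ring, Real.exp_zero, mul_one]

theorem ofReal_hermQ (q : ℕ) (t : ℝ) : (hermQ q t : ℂ) = (hermPoly ℂ q).eval (t : ℂ) := by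
  rw [hermQ_eq_eval, ← map_hermPoly Complex.ofRealHom, eval_map]
  exact (eval₂_at_apply Complex.ofRealHom t).symm

theorem iteratedDeriv_eval_mul_exp_neg (p : ℝ[X]) (n : ℕ) :
    iteratedDeriv n (fun x => p.eval x * rexp (-x)) =
      fun x => (((derivative - 1 : Module.End ℝ ℝ[X]) ^ n) p).eval x * rexp (-x) := by
  have hw (x : ℝ) : HasDerivAt (fun x => rexp (-x)) ((-1 : ℝ[X]).eval x * rexp (-x)) x :=
    (hasDerivAt_neg x).exp.congr_deriv (by simp)
  induction n with
  | zero => simp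
  | succ n ih =>
    rw [iteratedDeriv_succ, ih]
    funext x
    rw [(hasDerivAt_eval_mul (hw x) _).deriv, pow_succ', Module.End.mul_apply]
    simp only [LinearMap.sub_apply, Module.End.one_apply]
    ring_nf

theorem laguQ_eq_sum (q : ℕ) (ξ : ℝ) :
    laguQ q ξ = (q.factorial : ℝ)⁻¹ *
      ∑ k ∈ range (q + 1), q.choose k * q.descFactorial k * (-ξ) ^ (q - k) := by
  have hop : (derivative - 1 : Module.End ℝ ℝ[X]) =
      (-1 : ℝ) • (1 : Module.End ℝ ℝ[X]) + (1 : ℝ) • derivative := by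
    refine LinearMap.ext fun p => ?_
    simp [sub_eq_add_neg, add_comm]
  have h := iteratedDeriv_eval_mul_exp_neg (X ^ q) q
  simp only [eval_pow, eval_X] at h
  rw [laguQ, h, hop, Module.End.smul_one_add_smul_pow_apply]
  beta_reduce
  rw [mul_assoc, mul_left_comm (rexp ξ), ← Real.exp_add, add_neg_cancel, Real.exp_zero, mul_one,
    eval_finsetSum]
  congr 1
  refine sum_congr rfl fun k _ => ?_
  rw [iterate_derivative_X_pow_eq_C_mul, eval_smul, eval_mul, eval_C, eval_pow, eval_X, neg_pow ξ]
  simp only [one_pow, mul_one, smul_eq_mul]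
  ring

theorem integrable_pow_mul_exp_neg_sq (n : ℕ) : Integrable fun t : ℝ => t ^ n * rexp (-t ^ 2) := by
  simpa [Real.rpow_natCast] using
    integrable_rpow_mul_exp_neg_mul_sq one_pos (s := n) (by linarith [n.cast_nonneg (α := ℝ)])

theorem integrable_cexp_mul_exp_neg_sq_mul_eval (s : ℝ) (p : ℂ[X]) :
    Integrable fun t : ℝ => cexp (I * s * t) * rexp (-t ^ 2) * p.eval (t : ℂ) := by
  simp_rw [eval_eq_sum_range, mul_sum]
  refine integrable_finsetSum _ fun i _ => ?_
  have h : Integrable fun t : ℝ => cexp (I * s * t) * ((t ^ i * rexp (-t ^ 2) : ℝ) : ℂ) :=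
    (integrable_pow_mul_exp_neg_sq i).ofReal.bdd_mul (c := 1) (by fun_prop)
      (.of_forall fun t => by rw [mul_assoc, mul_comm I, ← ofReal_mul, norm_exp_ofReal_mul_I])
  refine (h.const_mul (p.coeff i)).congr (.of_forall fun t => ?_)
  push_cast
  ring

noncomputable def gaussFourier (s : ℝ) : ℂ[X] →ₗ[ℂ] ℂ where
  toFun p := ∫ t : ℝ, cexp (I * s * t) * rexp (-t ^ 2) * p.eval (t : ℂ)
  map_add' p q := by
    simp only [eval_add, mul_add]
    exact integral_add (integrable_cexp_mul_exp_neg_sq_mul_eval s p)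
      (integrable_cexp_mul_exp_neg_sq_mul_eval s q)
  map_smul' c p := by
    simp only [eval_smul, smul_eq_mul, RingHom.id_apply, ← integral_const_mul]
    congr 1 with t
    ring

theorem gaussFourier_apply (s : ℝ) (p : ℂ[X]) :
    gaussFourier s p = ∫ t : ℝ, cexp (I * s * t) * rexp (-t ^ 2) * p.eval (t : ℂ) := rfl

theorem gaussFourier_one (s : ℝ) : gaussFourier s 1 = √π * rexp (-s ^ 2 / 4) := by
  have h := fourierIntegral_gaussian (b := 1) (by simp) (s : ℂ)
  simp only [gaussFourier_apply, eval_one, mul_one]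
  convert h using 1
  · congr 1 with t
    push_cast
    ring_nf
  · rw [div_one, show (1 / 2 : ℂ) = ((1 / 2 : ℝ) : ℂ) by push_cast; ring,
      ← Complex.ofReal_cpow pi_pos.le, ← Real.sqrt_eq_rpow, mul_one]
    push_cast
    rfl

theorem hasDerivAt_cexp_mul_exp_neg_sq_mul_eval (s : ℝ) (p : ℂ[X]) (t : ℝ) :
    HasDerivAt (fun t : ℝ => cexp (I * s * t) * rexp (-t ^ 2) * p.eval (t : ℂ))
      (cexp (I * s * t) * rexp (-t ^ 2) *
        (derivative p - 2 * X * p + C (I * s) * p).eval (t : ℂ)) t := by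
  have hlin : HasDerivAt (fun t : ℝ => I * s * t) (I * s) t := by
    simpa using (hasDerivAt_id (t : ℂ)).comp_ofReal.const_mul (I * s)
  have hgauss : HasDerivAt (fun t : ℝ => ((rexp (-t ^ 2) : ℝ) : ℂ)) (-2 * t * rexp (-t ^ 2)) t := by
    have := ((hasDerivAt_pow 2 t).fun_neg.exp).ofReal_comp
    refine this.congr_deriv ?_
    push_cast
    ring
  have := (hlin.cexp.fun_mul hgauss).fun_mul (p.hasDerivAt (t : ℂ)).comp_ofReal
  refine this.congr_deriv ?_
  simp only [eval_add, eval_sub, eval_mul, eval_C, eval_X, eval_ofNat]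
  ring

theorem gaussFourier_derivative_sub (s : ℝ) (p : ℂ[X]) :
    gaussFourier s (derivative p - 2 * X * p) = -(I * s) * gaussFourier s p := by
  have h := integral_eq_zero_of_hasDerivAt_of_integrable
    (hasDerivAt_cexp_mul_exp_neg_sq_mul_eval s p)
    (integrable_cexp_mul_exp_neg_sq_mul_eval s _) (integrable_cexp_mul_exp_neg_sq_mul_eval s p)
  rw [← gaussFourier_apply, map_add, C_mul', map_smul, smul_eq_mul] at h
  linear_combination h

theorem gaussFourier_hermPoly (s : ℝ) (n : ℕ) :
    gaussFourier s (hermPoly ℂ n) = (-(I * s)) ^ n * gaussFourier s 1 := by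
  induction n with
  | zero => simp
  | succ n ih => rw [hermPoly_succ, gaussFourier_derivative_sub, ih, pow_succ]; ring

theorem gaussFourier_hermPoly_mul (s : ℝ) (m : ℕ) (g : ℂ[X]) :
    gaussFourier s (hermPoly ℂ m * g) =
      gaussFourier s ((((-(I * s)) • 1 - derivative : Module.End ℂ ℂ[X]) ^ m) g) := by
  induction m generalizing g with
  | zero => simp
  | succ m ih =>
    have hprod : hermPoly ℂ (m + 1) * g = derivative (hermPoly ℂ m * g) -
        2 * X * (hermPoly ℂ m * g) - hermPoly ℂ m * derivative g := by
      rw [hermPoly_succ, derivative_mul]; ring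
    rw [hprod, map_sub, gaussFourier_derivative_sub, pow_succ, Module.End.mul_apply, ← ih]
    simp only [LinearMap.sub_apply, LinearMap.smul_apply, Module.End.one_apply, mul_sub,
      mul_smul_comm, map_sub, map_smul, smul_eq_mul]

theorem gaussFourier_hermPoly_mul_hermPoly (s : ℝ) (m n : ℕ) :
    gaussFourier s (hermPoly ℂ m * hermPoly ℂ n) =
      ∑ k ∈ range (m + 1), m.choose k * 2 ^ k * n.descFactorial k *
        (-(I * s)) ^ (m - k) * (-(I * s)) ^ (n - k) * gaussFourier s 1 := by
  have hop : ((-(I * s)) • 1 - derivative : Module.End ℂ ℂ[X]) =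
      (-(I * s)) • 1 + (-1 : ℂ) • derivative := by
    refine LinearMap.ext fun p => ?_
    simp [sub_eq_add_neg]
  rw [gaussFourier_hermPoly_mul, hop, Module.End.smul_one_add_smul_pow_apply, map_sum]
  refine sum_congr rfl fun k _ => ?_
  rw [iterate_derivative_hermPoly, map_smul, ← C_eq_natCast, ← C_ofNat, ← C_neg, ← C_pow, ← C_mul,
    C_mul', map_smul, gaussFourier_hermPoly, smul_eq_mul, smul_eq_mul]
  have hsign : (-1 : ℂ) ^ k * (-2) ^ k = 2 ^ k := by rw [← mul_pow]; norm_num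
  linear_combination (m.choose k * n.descFactorial k * (-(I * s)) ^ (m - k) * (-(I * s)) ^ (n - k) *
    gaussFourier s 1) * hsign

/-- `(1/(q! 2^q √π)) ∫ e^{ist} e^{-t²} H_q(t)² dt = L_q(s²/2) e^{-s²/4}` (3.21). -/
theorem hermite_fourier_laguerre (q : ℕ) (s : ℝ) :
    (1 / (q.factorial * 2 ^ q * Real.sqrt π) : ℂ) *
      ∫ t : ℝ, Complex.exp (Complex.I * s * t) * Real.exp (-t ^ 2) * (hermQ q t : ℂ) ^ 2 =
      ((laguQ q (s ^ 2 / 2) * Real.exp (-s ^ 2 / 4) : ℝ) : ℂ) := by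
  have hintegral : (∫ t : ℝ, cexp (I * s * t) * rexp (-t ^ 2) * (hermQ q t : ℂ) ^ 2) =
      gaussFourier s (hermPoly ℂ q * hermPoly ℂ q) := by
    simp only [gaussFourier_apply, eval_mul, ofReal_hermQ, sq]
  rw [hintegral, gaussFourier_hermPoly_mul_hermPoly, gaussFourier_one, laguQ_eq_sum]
  have hπ : (√π : ℂ) ≠ 0 := ofReal_ne_zero.2 (Real.sqrt_pos.2 pi_pos).ne'
  push_cast
  simp only [mul_sum, sum_mul]
  refine sum_congr rfl fun k hk => ?_
  have h2 : (2 : ℂ) ^ q = 2 ^ k * 2 ^ (q - k) := by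
    rw [← pow_add, Nat.add_sub_cancel' (mem_range_succ_iff.1 hk)]
  have hc : (-(I * s)) ^ (q - k) * (-(I * s)) ^ (q - k) = (-(s : ℂ) ^ 2) ^ (q - k) := by
    rw [← mul_pow]
    congr 1
    linear_combination (s : ℂ) ^ 2 * I_sq
  rw [h2, show -((s : ℂ) ^ 2 / 2) = -(s : ℂ) ^ 2 / 2 by ring, div_pow, ← hc]
  field_simp
end

section
/- Let a : ℝ → ℝ be C¹ and 1-periodic with Fourier coefficients α_l, and B > 0, j ≥ 1. Then there exist k₋, k₊ ∈ [0,B) with ∫_ℝ a(t+k₋/B) t φ_j(t;B)² dt < 0 and ∫_ℝ a(t+k₊/B) t φ_j(t;B)² dt > 0 if and only if there exists l ∈ ℕ, l ≥ 1, with α_l I_j(2πl; B) ≠ 0. -/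
open MeasureTheory Real

/-! The function `F(k) = ∫ a(t + k/B) t φ_j(t)² dt` is continuous and `B`-periodic. By Fubini
and the periodicity of `a`, its `l`-th Fourier coefficient on `[0, B]` is `i α_l I_j(2πl; B)`: the
cosine half of `e^{2πilt}` integrates to zero against the odd weight `t φ_j²`. In particular
(`l = 0`) `F` has mean zero, so `F` changes sign on a period unless it vanishes identically; by
Parseval this happens iff some Fourier coefficient is nonzero, and since `F` is real its
coefficients come in conjugate pairs, so only `l ≥ 1` matters. -/

open Set

section HermiteFunctions

open Polynomial

theorem iterate_hermite_gaussian (q : ℕ) : ∃ P : ℝ[X], P.comp (-X) = (-1) ^ q * P ∧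
    (fun f : ℝ → ℝ => fun s => deriv f s - s * f s)^[q] (fun s => Real.exp (-(s ^ 2) / 2)) =
      fun t => P.eval t * Real.exp (-(t ^ 2) / 2) := by
  induction q with
  | zero => exact ⟨1, by simp, by simp⟩
  | succ q ih =>
    obtain ⟨P, hpar, hP⟩ := ih
    refine ⟨derivative P - 2 * X * P, ?_, ?_⟩
    · have hder : (derivative P).comp (-X) = -((-1) ^ q * derivative P) := by
        have h := congrArg derivative hpar
        rw [derivative_comp, derivative_neg, derivative_X, ← C_1, ← C_neg, ← C_pow,
          derivative_C_mul, C_pow, C_neg, C_1, neg_one_mul] at h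
        rw [← h, neg_neg]
      simp only [sub_comp, mul_comp, X_comp, ofNat_comp, hder, hpar]
      ring
    · rw [Function.iterate_succ_apply', hP]
      funext t
      have hsq : HasDerivAt (fun s : ℝ => -(s ^ 2) / 2) (-t) t :=
        ((hasDerivAt_pow 2 t).fun_neg.div_const 2).congr_deriv (by ring)
      have hprod := (P.hasDerivAt t).fun_mul hsq.exp
      dsimp only
      rw [hprod.deriv]
      simp only [eval_sub, eval_mul, eval_ofNat, eval_X]
      ring

theorem hermQ_eq_eval_s6 (q : ℕ) :
    ∃ P : ℝ[X], P.comp (-X) = (-1) ^ q * P ∧ ∀ t, hermQ q t = P.eval t := by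
  obtain ⟨P, hpar, hP⟩ := iterate_hermite_gaussian q
  refine ⟨P, hpar, fun t => ?_⟩
  rw [hermQ, hP, mul_left_comm, ← Real.exp_add, neg_div, add_neg_cancel, Real.exp_zero, mul_one]

theorem continuous_hermQ (q : ℕ) : Continuous (hermQ q) := by
  obtain ⟨P, -, hP⟩ := hermQ_eq_eval_s6 q
  exact (funext hP : hermQ q = _) ▸ P.continuous

theorem hermQ_neg (q : ℕ) (t : ℝ) : hermQ q (-t) = (-1) ^ q * hermQ q t := by
  obtain ⟨P, hpar, hP⟩ := hermQ_eq_eval_s6 q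
  simpa [hP, eval_comp] using congrArg (eval t) hpar

theorem integrable_eval_mul_exp_neg_mul_sq (Q : ℝ[X]) {b : ℝ} (hb : 0 < b) :
    Integrable fun t => Q.eval t * Real.exp (-b * t ^ 2) := by
  induction Q using Polynomial.induction_on' with
  | add p q hp hq => exact (hp.add hq).congr (.of_forall fun t => by simp [add_mul])
  | monomial n c =>
    simpa [mul_assoc, Real.rpow_natCast] using
      (integrable_rpow_mul_exp_neg_mul_sq hb (by linarith [n.cast_nonneg (α := ℝ)] :
        (-1 : ℝ) < n)).const_mul c

theorem continuous_oscFun (j : ℕ) (B : ℝ) : Continuous (oscFun j B) := by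
  unfold oscFun
  have := continuous_hermQ (j - 1)
  fun_prop

theorem oscFun_neg_sq (j : ℕ) (B t : ℝ) : oscFun j B (-t) ^ 2 = oscFun j B t ^ 2 := by
  have hsign : ((-1 : ℝ) ^ (j - 1)) ^ 2 = 1 := by
    rw [← pow_mul, mul_comm, pow_mul, neg_one_sq, one_pow]
  simp only [oscFun, mul_neg, hermQ_neg, neg_sq, mul_pow, hsign, one_mul]

theorem integrable_mul_oscFun_sq (j : ℕ) {B : ℝ} (hB : 0 < B) :
    Integrable fun t => t * oscFun j B t ^ 2 := by
  obtain ⟨P, -, hP⟩ := hermQ_eq_eval_s6 (j - 1)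
  set c := B ^ ((1 : ℝ) / 4) / Real.sqrt ((j - 1).factorial * 2 ^ (j - 1) * Real.sqrt π)
  refine (integrable_eval_mul_exp_neg_mul_sq (C (c ^ 2) * X * (P.comp (C (Real.sqrt B) * X)) ^ 2)
    hB).congr (.of_forall fun t => ?_)
  have hexp : Real.exp (-B * t ^ 2) = Real.exp (-(B * t ^ 2) / 2) ^ 2 := by
    rw [← Real.exp_nat_mul]; ring_nf
  simp only [oscFun, hP, c, eval_mul, eval_pow, eval_comp, eval_C, eval_X, hexp]
  ring

end HermiteFunctions

theorem fourierCoeffOn_eq_intervalIntegral_exp {T : ℝ} (hT : 0 < T) (f : ℝ → ℂ) (n : ℤ) :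
    fourierCoeffOn hT f n =
      T⁻¹ * ∫ x in 0..T, Complex.exp (-(2 * π * n * x / T) * Complex.I) * f x := by
  rw [fourierCoeffOn_eq_integral, sub_zero, one_div, Complex.real_smul]
  congr 2
  funext x
  rw [fourier_coe_apply, smul_eq_mul]
  push_cast
  ring_nf

theorem fourierCoeffOn_ofReal_neg {T : ℝ} (hT : 0 < T) (F : ℝ → ℝ) (n : ℤ) :
    fourierCoeffOn hT (fun x => (F x : ℂ)) (-n) =
      starRingEnd ℂ (fourierCoeffOn hT (fun x => (F x : ℂ)) n) := by
  simp_rw [fourierCoeffOn_eq_intervalIntegral_exp, intervalIntegral.integral_of_le hT.le, map_mul,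
    ← integral_conj, map_mul, ← Complex.exp_conj]
  simp only [map_neg, map_mul, map_div₀, Complex.conj_ofReal, Complex.conj_I, map_intCast,
    map_ofNat]
  congr 2
  funext x
  push_cast
  ring_nf

theorem fourierCoeffOn_zero {T : ℝ} (hT : 0 < T) (f : ℝ → ℂ) :
    fourierCoeffOn hT f 0 = T⁻¹ * ∫ x in 0..T, f x := by
  simp [fourierCoeffOn_eq_intervalIntegral_exp]

theorem exists_fourierCoeffOn_ne_zero {a b : ℝ} (hab : a < b) {f : ℝ → ℂ}
    (hf : Continuous f) (hne : ∃ x ∈ Icc a b, f x ≠ 0) :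
    ∃ n : ℤ, fourierCoeffOn hab f n ≠ 0 := by
  by_contra! hzero
  obtain ⟨C, hC⟩ := isCompact_Icc.exists_bound_of_continuousOn hf.continuousOn
  have hL2 : MemLp f 2 (volume.restrict (Ioc a b)) :=
    .of_bound hf.aestronglyMeasurable C ((ae_restrict_iff' measurableSet_Ioc).2
      (.of_forall fun x hx => hC x (Ioc_subset_Icc_self hx)))
  have hparseval := tsum_sq_fourierCoeffOn hab hL2
  simp only [hzero, norm_zero, ne_eq, OfNat.ofNat_ne_zero, not_false_eq_true, zero_pow,
    tsum_zero, smul_eq_mul, zero_eq_mul, inv_eq_zero, sub_eq_zero, hab.ne', false_or] at hparseval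
  obtain ⟨x, hx, hfx⟩ := hne
  have hcont : Continuous fun x => ‖f x‖ ^ 2 := by fun_prop
  exact (intervalIntegral.integral_pos hab hcont.continuousOn (fun _ _ => by positivity)
    ⟨x, hx, by positivity⟩).ne' hparseval

theorem exists_pos_fourierCoeffOn_ofReal_ne_zero {T : ℝ} (hT : 0 < T) {F : ℝ → ℝ}
    (hmean : ∫ x in 0..T, F x = 0) {n : ℤ}
    (hn : fourierCoeffOn hT (fun x => (F x : ℂ)) n ≠ 0) :
    ∃ l : ℕ, 1 ≤ l ∧ fourierCoeffOn hT (fun x => (F x : ℂ)) l ≠ 0 := by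
  obtain ⟨l, rfl | rfl⟩ := Int.eq_nat_or_neg n
  all_goals
    refine ⟨l, Nat.one_le_iff_ne_zero.2 ?_, ?_⟩
  · rintro rfl
    simp [fourierCoeffOn_zero, intervalIntegral.integral_ofReal, hmean] at hn
  · simpa using hn
  · rintro rfl
    simp [fourierCoeffOn_zero, intervalIntegral.integral_ofReal, hmean] at hn
  · simpa [fourierCoeffOn_ofReal_neg] using hn

namespace Function.Periodic

variable {F : ℝ → ℝ} {T : ℝ}

theorem eq_zero_of_nonneg_of_intervalIntegral_eq_zero (hper : Periodic F T) (hT : 0 < T)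
    (hF : Continuous F) (hnonneg : ∀ x ∈ Ico 0 T, 0 ≤ F x) (hmean : ∫ x in 0..T, F x = 0) :
    F = 0 := by
  have hnonneg' : ∀ x, 0 ≤ F x := fun x => by
    obtain ⟨y, hy, hxy⟩ := hper.exists_mem_Ico₀ hT x
    exact hxy ▸ hnonneg y hy
  funext x
  obtain ⟨y, hy, hxy⟩ := hper.exists_mem_Ico₀ hT x
  by_contra hne
  exact (intervalIntegral.integral_pos hT hF.continuousOn (fun z _ => hnonneg' z)
    ⟨y, Ico_subset_Icc_self hy, (hnonneg' y).lt_of_ne (hxy ▸ Ne.symm hne)⟩).ne' hmean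

theorem exists_neg_and_pos_of_ne_zero (hper : Periodic F T) (hT : 0 < T) (hF : Continuous F)
    (hmean : ∫ x in 0..T, F x = 0) (hne : F ≠ 0) :
    ∃ km ∈ Ico 0 T, ∃ kp ∈ Ico 0 T, F km < 0 ∧ 0 < F kp := by
  by_contra! hsign
  by_cases hneg : ∃ km ∈ Ico 0 T, F km < 0
  · obtain ⟨km, hkm, hFkm⟩ := hneg
    refine hne (neg_eq_zero.1 ((hper.comp Neg.neg).eq_zero_of_nonneg_of_intervalIntegral_eq_zero
      hT hF.neg (fun x hx => neg_nonneg.2 (hsign km hkm x hx hFkm)) ?_))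
    simp [hmean]
  · push Not at hneg
    exact hne (hper.eq_zero_of_nonneg_of_intervalIntegral_eq_zero hT hF hneg hmean)

theorem exists_neg_and_pos_iff_exists_fourierCoeffOn_ne_zero (hper : Periodic F T) (hT : 0 < T)
    (hF : Continuous F) (hmean : ∫ x in 0..T, F x = 0) :
    (∃ km ∈ Ico 0 T, ∃ kp ∈ Ico 0 T, F km < 0 ∧ 0 < F kp) ↔
      ∃ l : ℕ, 1 ≤ l ∧ fourierCoeffOn hT (fun x => (F x : ℂ)) l ≠ 0 := by
  constructor
  · rintro ⟨km, hkm, -, -, hFkm, -⟩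
    obtain ⟨n, hn⟩ := exists_fourierCoeffOn_ne_zero hT (f := fun x => (F x : ℂ)) (by fun_prop)
      ⟨km, Ico_subset_Icc_self hkm, Complex.ofReal_ne_zero.2 hFkm.ne⟩
    exact exists_pos_fourierCoeffOn_ofReal_ne_zero hT hmean hn
  · rintro ⟨l, -, hl⟩
    refine hper.exists_neg_and_pos_of_ne_zero hT hF hmean fun hzero => hl ?_
    simp [hzero, fourierCoeffOn_eq_intervalIntegral_exp]

end Function.Periodic

theorem continuous_integral_comp_add_div_mul {a w : ℝ → ℝ} {M : ℝ} (ha : Continuous a)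
    (hM : ∀ x, |a x| ≤ M) (hw : Integrable w) (B : ℝ) :
    Continuous fun k => ∫ t, a (t + k / B) * w t :=
  continuous_of_dominated
    (fun k => (ha.comp (by fun_prop)).aestronglyMeasurable.mul hw.aestronglyMeasurable)
    (fun k => .of_forall fun t => by
      rw [norm_mul, Real.norm_eq_abs]
      exact mul_le_mul_of_nonneg_right (hM _) (norm_nonneg _))
    (hw.norm.const_mul M) (.of_forall fun t => by fun_prop)

theorem periodic_integral_comp_add_div_mul {a : ℝ → ℝ} (hper : Function.Periodic a 1)
    (w : ℝ → ℝ) {B : ℝ} (hB : B ≠ 0) :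
    Function.Periodic (fun k => ∫ t, a (t + k / B) * w t) B := fun k => by
  simp only [add_div, div_self hB, ← add_assoc, hper (_ : ℝ)]

open Complex in
theorem intervalIntegral_exp_mul_comp_add_div {a : ℝ → ℝ} (hper : Function.Periodic a 1)
    {B : ℝ} (hB : 0 < B) (t : ℝ) (l : ℕ) :
    ∫ k in 0..B, cexp (-(2 * π * l * k / B) * I) * a (t + k / B) =
      B * cexp (2 * π * l * t * I) * fourCoef a l := by
  set g : ℝ → ℂ := fun v => a v * cexp (-(2 * π * l * v) * I)
  have hg : Function.Periodic g 1 := fun v => by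
    have : -(2 * π * l * ((v + 1 : ℝ) : ℂ)) * I =
        -(2 * π * l * v) * I + (-l : ℤ) * (2 * π * I) := by
      push_cast; ring
    simp only [g, hper v, this, Complex.exp_add, exp_int_mul_two_pi_mul_I, mul_one]
  have hshift : ∀ k : ℝ, cexp (-(2 * π * l * k / B) * I) * a (t + k / B) =
      cexp (2 * π * l * t * I) * g (t + k / B) := fun k => by
    have : cexp (-(2 * π * l * k / B) * I) =
        cexp (2 * π * l * t * I) * cexp (-(2 * π * l * ((t + k / B : ℝ) : ℂ)) * I) := by
      rw [← Complex.exp_add]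
      congr 1
      push_cast
      field_simp
      ring
    simp only [g, this]
    ring
  have hscale : ∫ k in 0..B, g (t + k / B) = B * ∫ u in 0..1, g (t + u) := by
    simpa [div_self hB.ne'] using
      intervalIntegral.integral_comp_div (fun u => g (t + u)) (a := 0) (b := B) hB.ne'
  simp_rw [hshift, intervalIntegral.integral_const_mul, hscale,
    intervalIntegral.integral_comp_add_left g t, add_zero, hg.intervalIntegral_add_eq t 0, zero_add]
  simp only [fourCoef, g]
  ring

open Complex in
theorem fourierCoeffOn_integral_comp_add_div_mul {a w : ℝ → ℝ} {M B : ℝ} (ha : Continuous a)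
    (hper : Function.Periodic a 1) (hM : ∀ x, |a x| ≤ M) (hw : Integrable w) (hB : 0 < B)
    (l : ℕ) :
    fourierCoeffOn hB (fun k => ((∫ t, a (t + k / B) * w t : ℝ) : ℂ)) l =
      fourCoef a l * ∫ t, (w t : ℂ) * cexp (2 * π * l * t * I) := by
  set e : ℝ → ℂ := fun k => cexp (-(2 * π * l * k / B) * I)
  have hint : Integrable (Function.uncurry fun k t => e k * a (t + k / B) * w t)
      ((volume.restrict (uIoc 0 B)).prod volume) := by
    rw [uIoc_of_le hB.le]
    refine Integrable.mono' ((integrable_const M).mul_prod hw.norm) ?_ (.of_forall fun p => ?_)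
    · exact (by fun_prop : Continuous fun p : ℝ × ℝ => e p.1 * a (p.2 + p.1 / B))
        |>.aestronglyMeasurable.mul
          (continuous_ofReal.comp_aestronglyMeasurable hw.aestronglyMeasurable.comp_snd)
    · obtain ⟨k, t⟩ := p
      have he : ‖e k‖ = 1 := by simp [e, Complex.norm_exp]
      simp only [Function.uncurry_apply_pair, norm_mul, he, one_mul, norm_real, Real.norm_eq_abs]
      exact mul_le_mul_of_nonneg_right (hM _) (abs_nonneg _)
  calc fourierCoeffOn hB (fun k => ((∫ t, a (t + k / B) * w t : ℝ) : ℂ)) l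
      = B⁻¹ * ∫ k in 0..B, ∫ t, e k * a (t + k / B) * w t := by
        rw [fourierCoeffOn_eq_intervalIntegral_exp]
        congr 1
        refine intervalIntegral.integral_congr fun k _ => ?_
        rw [← integral_complex_ofReal, ← integral_const_mul]
        push_cast
        simp only [e, mul_assoc]
    _ = B⁻¹ * ∫ t, (∫ k in 0..B, e k * a (t + k / B)) * w t := by
        simp_rw [intervalIntegral_integral_swap hint, ← intervalIntegral.integral_mul_const]
    _ = fourCoef a l * ∫ t, (w t : ℂ) * cexp (2 * π * l * t * I) := by
        simp_rw [e, intervalIntegral_exp_mul_comp_add_div hper hB, ← integral_const_mul]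
        refine integral_congr_ae (.of_forall fun t => ?_)
        have hB' : (B : ℂ) ≠ 0 := ofReal_ne_zero.2 hB.ne'
        push_cast
        field_simp

open Complex in
theorem integral_mul_exp_of_odd {w : ℝ → ℝ} (hw : Integrable w) (hodd : ∀ t, w (-t) = -w t)
    (s : ℝ) : ∫ t, (w t : ℂ) * cexp (s * t * I) = I * ∫ t, Real.sin (s * t) * w t := by
  set f : ℝ → ℂ := fun t => (w t : ℂ) * cexp (s * t * I)
  have hf : Integrable f :=
    hw.ofReal.mul_bdd (c := 1) (by fun_prop) (.of_forall fun t => by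
      rw [← ofReal_mul, norm_exp_ofReal_mul_I])
  have hsymm : ∀ t, f t + f (-t) = 2 * I * (Real.sin (s * t) * w t : ℝ) := fun t => by
    simp only [f, hodd, ofReal_neg, mul_neg, Complex.exp_mul_I, Complex.cos_neg, Complex.sin_neg]
    push_cast
    ring
  have h2 : 2 * ∫ t, f t = ∫ t, (f t + f (-t)) := by
    rw [integral_add hf hf.comp_neg, integral_neg_eq_self, two_mul]
  simp_rw [hsymm, integral_const_mul, integral_complex_ofReal] at h2
  linear_combination h2 / 2

theorem oscF_signs_iff_nonvanishing_coeff_general (a : ℝ → ℝ) (ha : ContDiff ℝ 1 a)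
    (hper : Function.Periodic a 1) (B : ℝ) (hB : 0 < B) (j : ℕ) :
    (∃ km ∈ Set.Ico (0 : ℝ) B, ∃ kp ∈ Set.Ico (0 : ℝ) B,
      (∫ t : ℝ, a (t + km / B) * t * (oscFun j B t) ^ 2) < 0 ∧
      (∫ t : ℝ, a (t + kp / B) * t * (oscFun j B t) ^ 2) > 0) ↔
    ∃ l : ℕ, 1 ≤ l ∧ fourCoef a l * (oscI j B (2 * π * l) : ℂ) ≠ 0 := by
  obtain ⟨M, hM⟩ : ∃ M, ∀ x, |a x| ≤ M := by
    obtain ⟨M, hM⟩ := (hper.isBounded_of_continuous one_ne_zero ha.continuous).exists_norm_le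
    exact ⟨M, fun x => hM _ ⟨x, rfl⟩⟩
  set w : ℝ → ℝ := fun t => t * oscFun j B t ^ 2
  have hw : Integrable w := integrable_mul_oscFun_sq j hB
  have hodd : ∀ t, w (-t) = -w t := fun t => by simp only [w, oscFun_neg_sq, neg_mul]
  have hcoeff (l : ℕ) :
      fourierCoeffOn hB (fun k => ((∫ t, a (t + k / B) * w t : ℝ) : ℂ)) l =
        Complex.I * (fourCoef a l * oscI j B (2 * π * l)) := by
    have hsin := integral_mul_exp_of_odd hw hodd (2 * π * l)
    push_cast at hsin
    rw [fourierCoeffOn_integral_comp_add_div_mul ha.continuous hper hM hw hB, hsin]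
    simp only [oscI, w, mul_assoc]
    ring
  have hmean : ∫ k in 0..B, ∫ t, a (t + k / B) * w t = 0 := by
    simpa [fourierCoeffOn_zero, intervalIntegral.integral_ofReal, oscI, hB.ne'] using hcoeff 0
  have hF (k : ℝ) : ∫ t, a (t + k / B) * t * oscFun j B t ^ 2 = ∫ t, a (t + k / B) * w t := by
    simp only [w, mul_assoc]
  simp only [hF, gt_iff_lt]
  rw [(periodic_integral_comp_add_div_mul hper w hB.ne')
    |>.exists_neg_and_pos_iff_exists_fourierCoeffOn_ne_zero hB
      (continuous_integral_comp_add_div_mul ha.continuous hM hw B) hmean]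
  simp [hcoeff]

/-- existence of `k₋, k₊ ∈ [0, B)` with `F_j(k₋) < 0 < F_j(k₊)` is equivalent to
the existence of `l ≥ 1` with `α_l I_j(2πl; B) ≠ 0` (3.18). -/
theorem oscF_signs_iff_nonvanishing_coeff (a : ℝ → ℝ) (ha : ContDiff ℝ 1 a)
    (hper : Function.Periodic a 1) (B : ℝ) (hB : 0 < B) (j : ℕ) (hj : 1 ≤ j) :
    (∃ km ∈ Set.Ico (0 : ℝ) B, ∃ kp ∈ Set.Ico (0 : ℝ) B,
      (∫ t : ℝ, a (t + km / B) * t * (oscFun j B t) ^ 2) < 0 ∧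
      (∫ t : ℝ, a (t + kp / B) * t * (oscFun j B t) ^ 2) > 0) ↔
    ∃ l : ℕ, 1 ≤ l ∧ fourCoef a l * (oscI j B (2 * π * l) : ℂ) ≠ 0 :=
  oscF_signs_iff_nonvanishing_coeff_general a ha hper B hB j
end
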